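/- For every x=(x₂,x₃)∈ℝ², the function t ↦ (A+A')(x₂ + t·x₃, x₃ + t·x₂) is differentiable at t=0, and (B+B')(x) − d/dt|_{t=0} (A+A')(x₂ + t·x₃, x₃ + t·x₂) = 2^{−3/2}·(4x₂² − 1/π)·e^{−π(x₂²+x₃²)}. (Together with D(B+B')=A+A', this expresses the identity d φ₀,₁ = φ₁,₁ of paper Theorem 5.11: the Kudla–Millson form φ₁,₁ on D_W is exact with explicit primitive φ₀,₁ = ψ̃₀,₁ + ψ̃'₀,₁.) -/

import Mathlib

open MeasureTheory

/-- The upper incomplete gamma function `Γ(1/2, a) = ∫_a^∞ e^{-u} u^{-1/2} du`. -/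
noncomputable def Ginc (a : ℝ) : ℝ := ∫ u in Set.Ioi a, Real.exp (-u) * u ^ (-(1:ℝ)/2)

/-- The `e₂`-component `A` of the singular Schwartz function `ψ̃₀,₁`. -/
noncomputable def A (x : ℝ × ℝ) : ℝ :=
  (1 / (2 * Real.sqrt Real.pi)) * x.1 * Real.sign x.2 * Ginc (2 * Real.pi * x.2 ^ 2) *
    Real.exp (-(Real.pi * (x.1 ^ 2 - x.2 ^ 2)))

/-- The `e₃`-component `B` of the singular Schwartz function `ψ̃₀,₁`. -/
noncomputable def B (x : ℝ × ℝ) : ℝ :=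
  -(1 / (2 * Real.sqrt 2 * Real.pi)) * Real.exp (-(Real.pi * (x.1 ^ 2 + x.2 ^ 2)))
  + (1 / (2 * Real.sqrt Real.pi)) * |x.2| * Ginc (2 * Real.pi * x.2 ^ 2) *
      Real.exp (-(Real.pi * (x.1 ^ 2 - x.2 ^ 2)))

/-- The `e₃`-component `B'` of the singular function `ψ̃'₀,₁`. -/
noncomputable def B' (x : ℝ × ℝ) : ℝ :=
  if x.1 ^ 2 - x.2 ^ 2 > 0 then
    (1/2) * min |x.1 - x.2| |x.1 + x.2| * Real.exp (-(Real.pi * (x.1 ^ 2 - x.2 ^ 2)))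
  else 0

/-- The `e₂`-component `A'` of the singular function `ψ̃'₀,₁`. -/
noncomputable def A' (x : ℝ × ℝ) : ℝ := - Real.sign (x.1 * x.2) * B' x

/-! Along the hyperbolic rotation `t ↦ (x₂ + t x₃, x₃ + t x₂)` the form `q` is scaled by `1 - t²`,
so the Gaussian factor `e^{-πq}` has derivative zero at `t = 0`, and the sign of a nonzero
coordinate stays constant nearby. For `x₃ ≠ 0`, both `A` and `A'` are therefore smooth along the
orbit: the derivative of `A` comes from `∂ₐΓ(1/2, a) = -e^{-a} a^{-1/2}`, and that of `A'` is
exactly `B'`. For `x₃ = 0`, the jumps of `A` and `A'` at `t = 0` cancel: since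
`sgn t · Γ(1/2, βt²) = sgn t · √π - 2√β ∫₀ᵗ e^{-βs²} ds`, the sum is
`|x₂| (t/2 - √(β/π) ∫₀ᵗ e^{-βs²} ds) e^{-πq}` near `t = 0`, with `β = 2πx₂²`. -/

open Set Filter Topology Real

namespace Real

lemma sign_mul (u v : ℝ) : Real.sign (u * v) = Real.sign u * Real.sign v := by
  rcases lt_trichotomy u 0 with hu | hu | hu <;> rcases lt_trichotomy v 0 with hv | hv | hv <;>
    simp [sign_of_neg, sign_of_pos, hu, hv, mul_pos_of_neg_of_neg, mul_neg_of_pos_of_neg,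
      mul_neg_of_neg_of_pos]

lemma sign_mul_abs (r : ℝ) : Real.sign r * |r| = r := by
  rcases lt_trichotomy r 0 with hr | rfl | hr
  · simp [sign_of_neg hr, abs_of_neg hr]
  · simp
  · simp [sign_of_pos hr, abs_of_pos hr]

lemma sign_mul_self (r : ℝ) : Real.sign r * r = |r| := by
  rcases lt_trichotomy r 0 with hr | rfl | hr
  · simp [sign_of_neg hr, abs_of_neg hr]
  · simp
  · simp [sign_of_pos hr, abs_of_pos hr]

lemma eventually_sign_eq {c : ℝ} (hc : c ≠ 0) : ∀ᶠ y in 𝓝 c, Real.sign y = Real.sign c := by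
  rcases hc.lt_or_gt with h | h
  · filter_upwards [eventually_lt_nhds h] with y hy
    rw [sign_of_neg hy, sign_of_neg h]
  · filter_upwards [eventually_gt_nhds h] with y hy
    rw [sign_of_pos hy, sign_of_pos h]

end Real

noncomputable def gincIntegrand (u : ℝ) : ℝ := exp (-u) * u ^ (-(1:ℝ)/2)

lemma Ginc_eq_setIntegral (a : ℝ) : Ginc a = ∫ u in Ioi a, gincIntegrand u := rfl

lemma integrableOn_gincIntegrand : IntegrableOn gincIntegrand (Ioi 0) := by
  have h := Real.GammaIntegral_convergent (s := 1/2) (by norm_num)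
  refine h.congr_fun (fun u _ => ?_) measurableSet_Ioi
  norm_num [gincIntegrand]

lemma Ginc_zero : Ginc 0 = √π := by
  rw [← Real.Gamma_one_half_eq, Real.Gamma_eq_integral (by norm_num)]
  norm_num [Ginc]

lemma Ginc_eq_sqrt_pi_sub {a : ℝ} (ha : 0 ≤ a) :
    Ginc a = √π - ∫ u in (0:ℝ)..a, gincIntegrand u := by
  rw [intervalIntegral.integral_of_le ha, ← Ginc_zero, Ginc_eq_setIntegral, Ginc_eq_setIntegral,
    ← Ioc_union_Ioi_eq_Ioi ha, setIntegral_union (Ioc_disjoint_Ioi le_rfl) measurableSet_Ioi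
      (integrableOn_gincIntegrand.mono_set Ioc_subset_Ioi_self)
      (integrableOn_gincIntegrand.mono_set (Ioi_subset_Ioi ha))]
  ring

lemma continuousAt_gincIntegrand {a : ℝ} (ha : 0 < a) : ContinuousAt gincIntegrand a :=
  (continuous_exp.comp continuous_neg).continuousAt.mul
    (continuousAt_rpow_const a _ (Or.inl ha.ne'))

lemma intervalIntegrable_gincIntegrand {a : ℝ} (ha : 0 ≤ a) :
    IntervalIntegrable gincIntegrand volume 0 a :=
  (intervalIntegrable_iff_integrableOn_Ioc_of_le ha).2
    (integrableOn_gincIntegrand.mono_set Ioc_subset_Ioi_self)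

lemma hasDerivAt_Ginc {a : ℝ} (ha : 0 < a) : HasDerivAt Ginc (-gincIntegrand a) a := by
  have hmeas : StronglyMeasurableAtFilter gincIntegrand (𝓝 a) :=
    ContinuousOn.stronglyMeasurableAtFilter isOpen_Ioi
      (fun x hx => (continuousAt_gincIntegrand hx).continuousWithinAt) a ha
  refine ((intervalIntegral.integral_hasDerivAt_right (intervalIntegrable_gincIntegrand ha.le)
    hmeas (continuousAt_gincIntegrand ha)).const_sub √π).congr_of_eventuallyEq ?_
  filter_upwards [eventually_gt_nhds ha] with x hx using Ginc_eq_sqrt_pi_sub hx.le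

lemma continuousOn_Ginc {C : ℝ} (hC : 0 ≤ C) : ContinuousOn Ginc (Icc 0 C) := by
  have h := intervalIntegral.continuousOn_primitive_interval'
    (intervalIntegrable_gincIntegrand hC) left_mem_uIcc
  rw [uIcc_of_le hC] at h
  exact (continuousOn_const.sub h).congr fun x hx => Ginc_eq_sqrt_pi_sub hx.1

lemma gincIntegrand_mul_sq {β : ℝ} (hβ : 0 ≤ β) (s : ℝ) :
    gincIntegrand (β * s ^ 2) = exp (-(β * s ^ 2)) / (√β * |s|) := by
  rw [gincIntegrand, show -(1:ℝ)/2 = -(1/2) by norm_num, rpow_neg (by positivity),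
    ← sqrt_eq_rpow, sqrt_mul hβ, sqrt_sq_eq_abs, div_eq_mul_inv]

lemma hasDerivAt_Ginc_mul_sq {β s : ℝ} (hβ : 0 < β) (hs : s ≠ 0) :
    HasDerivAt (fun s => Ginc (β * s ^ 2)) (-(2 * √β * Real.sign s * exp (-(β * s ^ 2)))) s := by
  have h := (hasDerivAt_Ginc (by positivity : 0 < β * s ^ 2)).comp s
    ((hasDerivAt_pow 2 s).const_mul β)
  refine h.congr_deriv ?_
  rw [gincIntegrand_mul_sq hβ.le]
  have habs : |s| ≠ 0 := abs_ne_zero.2 hs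
  norm_num
  field_simp
  rw [sq_sqrt hβ.le, mul_assoc, mul_comm |s|, Real.sign_mul_abs]

lemma Ginc_mul_sq {β t : ℝ} (hβ : 0 < β) (ht : 0 ≤ t) :
    Ginc (β * t ^ 2) = √π - 2 * √β * ∫ s in (0:ℝ)..t, exp (-(β * s ^ 2)) := by
  have hmaps : MapsTo (fun s : ℝ => β * s ^ 2) (Icc 0 t) (Icc 0 (β * t ^ 2)) := fun s hs =>
    ⟨by positivity, mul_le_mul_of_nonneg_left (pow_le_pow_left₀ hs.1 hs.2 2) hβ.le⟩
  have hFTC := intervalIntegral.integral_eq_sub_of_hasDerivAt_of_le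
    (f := fun s => Ginc (β * s ^ 2)) ht ((continuousOn_Ginc (by positivity)).comp (by fun_prop) hmaps)
    (fun s hs => by simpa [Real.sign_of_pos hs.1] using hasDerivAt_Ginc_mul_sq hβ hs.1.ne')
    ((by fun_prop : Continuous fun s => -(2 * √β * exp (-(β * s ^ 2)))).intervalIntegrable 0 t)
  rw [intervalIntegral.integral_neg, intervalIntegral.integral_const_mul] at hFTC
  simp only [ne_eq, OfNat.ofNat_ne_zero, not_false_eq_true, zero_pow,
    mul_zero, Ginc_zero] at hFTC
  linarith

lemma sign_mul_Ginc_mul_sq {β : ℝ} (hβ : 0 < β) (t : ℝ) :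
    Real.sign t * Ginc (β * t ^ 2)
      = Real.sign t * √π - 2 * √β * ∫ s in (0:ℝ)..t, exp (-(β * s ^ 2)) := by
  rcases lt_trichotomy t 0 with ht | rfl | ht
  · have hodd : ∫ s in (0:ℝ)..-t, exp (-(β * s ^ 2))
        = -∫ s in (0:ℝ)..t, exp (-(β * s ^ 2)) := by
      have h := intervalIntegral.integral_comp_neg (a := 0) (b := t) fun s => exp (-(β * s ^ 2))
      simp only [neg_sq, neg_zero] at h
      rw [h, intervalIntegral.integral_symm (-t) 0]
    rw [← neg_sq, Ginc_mul_sq hβ (by linarith), hodd, Real.sign_of_neg ht]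
    ring
  · simp
  · rw [Ginc_mul_sq hβ ht.le, Real.sign_of_pos ht]
    ring

lemma min_abs_sub_abs_add {u v : ℝ} (h : v ^ 2 < u ^ 2) : min |u - v| |u + v| = |u| - |v| := by
  have h' := sq_lt_sq.1 h
  rcases abs_cases u with ⟨hu, _⟩ | ⟨hu, _⟩ <;> rcases abs_cases v with ⟨hv, _⟩ | ⟨hv, _⟩ <;>
    rcases abs_cases (u - v) with ⟨h₁, _⟩ | ⟨h₁, _⟩ <;>
    rcases abs_cases (u + v) with ⟨h₂, _⟩ | ⟨h₂, _⟩ <;>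
    rw [hu, hv] at h' <;> rw [hu, hv, h₁, h₂, min_def] <;> split_ifs <;> linarith

lemma sign_mul_mul_min_abs {u v : ℝ} (h : v ^ 2 < u ^ 2) :
    Real.sign (u * v) * min |u - v| |u + v| = Real.sign v * u - Real.sign u * v := by
  rw [min_abs_sub_abs_add h, Real.sign_mul]
  linear_combination Real.sign v * Real.sign_mul_abs u - Real.sign u * Real.sign_mul_abs v

lemma A'_eq_of_pos {u v : ℝ} (h : 0 < u ^ 2 - v ^ 2) :
    A' (u, v) = -(1/2) * (Real.sign v * u - Real.sign u * v) * exp (-(π * (u ^ 2 - v ^ 2))) := by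
  simp only [A', B', if_pos h]
  rw [← sign_mul_mul_min_abs (by linarith)]
  ring

lemma A'_eq_zero_of_nonpos {u v : ℝ} (h : u ^ 2 - v ^ 2 ≤ 0) : A' (u, v) = 0 := by
  simp [A', B', h.not_gt]

lemma boost_sq_sub_sq (x₂ x₃ t : ℝ) :
    (x₂ + t * x₃) ^ 2 - (x₃ + t * x₂) ^ 2 = (1 - t ^ 2) * (x₂ ^ 2 - x₃ ^ 2) := by
  ring

lemma eventually_one_sub_sq_pos : ∀ᶠ t in 𝓝 (0:ℝ), 0 < 1 - t ^ 2 := by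
  have h : Tendsto (fun t : ℝ => 1 - t ^ 2) (𝓝 0) (𝓝 1) :=
    (by fun_prop : Continuous fun t : ℝ => 1 - t ^ 2).tendsto' 0 1 (by norm_num)
  exact h.eventually (eventually_gt_nhds one_pos)

lemma eventually_sign_add_mul_eq {c : ℝ} (hc : c ≠ 0) (d : ℝ) :
    ∀ᶠ t in 𝓝 (0:ℝ), Real.sign (c + t * d) = Real.sign c := by
  have h : Tendsto (fun t : ℝ => c + t * d) (𝓝 0) (𝓝 c) :=
    (by fun_prop : Continuous fun t : ℝ => c + t * d).tendsto' 0 c (by simp)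
  exact h.eventually (Real.eventually_sign_eq hc)

lemma hasDerivAt_exp_boost (x₂ x₃ : ℝ) :
    HasDerivAt (fun t : ℝ => exp (-(π * ((x₂ + t * x₃) ^ 2 - (x₃ + t * x₂) ^ 2)))) 0 0 := by
  simp_rw [boost_sq_sub_sq]
  simpa using ((((hasDerivAt_id (0:ℝ)).pow 2).const_sub 1).mul_const (x₂ ^ 2 - x₃ ^ 2)
    |>.const_mul π).neg.exp

lemma HasDerivAt.mul_exp_boost {g : ℝ → ℝ} {g' : ℝ} (x₂ x₃ : ℝ) (hg : HasDerivAt g g' 0) :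
    HasDerivAt (fun t => g t * Real.exp (-(π * ((x₂ + t * x₃) ^ 2 - (x₃ + t * x₂) ^ 2))))
      (g' * Real.exp (-(π * (x₂ ^ 2 - x₃ ^ 2)))) 0 := by
  refine (hg.mul (hasDerivAt_exp_boost x₂ x₃)).congr_deriv ?_
  simp

lemma hasDerivAt_const_add_mul (c d t : ℝ) : HasDerivAt (fun t : ℝ => c + t * d) d t := by
  simpa using ((hasDerivAt_id t).mul_const d).const_add c

noncomputable def kudlaMillsonCoeff (x₂ x₃ : ℝ) : ℝ :=
  (2:ℝ) ^ (-(3:ℝ)/2) * (4 * x₂ ^ 2 - 1 / π) * exp (-(π * (x₂ ^ 2 + x₃ ^ 2)))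

lemma kudlaMillsonCoeff_eq (x₂ x₃ : ℝ) :
    kudlaMillsonCoeff x₂ x₃
      = (√2 * x₂ ^ 2 - 1 / (2 * √2 * π)) * exp (-(π * (x₂ ^ 2 + x₃ ^ 2))) := by
  have h : (2:ℝ) ^ (-(3:ℝ)/2) = 1 / (2 * √2) := by
    rw [show -(3:ℝ)/2 = -(1 + 1/2) by norm_num, rpow_neg two_pos.le, rpow_add two_pos, rpow_one,
      ← sqrt_eq_rpow, one_div]
  have h2 : √2 ^ 2 = 2 := sq_sqrt two_pos.le
  rw [kudlaMillsonCoeff, h]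
  field_simp
  linear_combination (-2 * π * x₂ ^ 2) * h2

lemma hasDerivAt_A_boost {x₂ x₃ : ℝ} (hx₃ : x₃ ≠ 0) :
    HasDerivAt (fun t => A (x₂ + t * x₃, x₃ + t * x₂))
      (B (x₂, x₃) - kudlaMillsonCoeff x₂ x₃) 0 := by
  set c := 1 / (2 * √π)
  have hu := ((hasDerivAt_const_add_mul x₂ x₃ 0).const_mul c).mul_const (Real.sign x₃)
  have hG := (hasDerivAt_Ginc_mul_sq (by positivity : 0 < 2 * π) hx₃).comp_of_eq 0
    (hasDerivAt_const_add_mul x₃ x₂ 0) (by simp)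
  have hev : (fun t => c * (x₂ + t * x₃) * Real.sign (x₃ + t * x₂) *
      Ginc (2 * π * (x₃ + t * x₂) ^ 2)) =ᶠ[𝓝 0]
      fun t => c * (x₂ + t * x₃) * Real.sign x₃ * Ginc (2 * π * (x₃ + t * x₂) ^ 2) := by
    filter_upwards [eventually_sign_add_mul_eq hx₃ x₂] with t ht
    rw [ht]
  refine ((hu.mul hG).congr_of_eventuallyEq hev).mul_exp_boost x₂ x₃ |>.congr_deriv ?_
  have hc : c * √π = 1 / 2 := by
    simp only [c]
    field_simp
  have hs : Real.sign x₃ * Real.sign x₃ = 1 := by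
    rcases hx₃.lt_or_gt with h | h <;> simp [Real.sign_of_neg, Real.sign_of_pos, h]
  set e := exp (-(2 * π * x₃ ^ 2))
  set e' := exp (-(π * (x₂ ^ 2 - x₃ ^ 2)))
  have hexp : e * e' = exp (-(π * (x₂ ^ 2 + x₃ ^ 2))) := by
    rw [← exp_add]; ring_nf
  rw [B, kudlaMillsonCoeff_eq, sqrt_mul two_pos.le, ← Real.sign_mul_self x₃]
  simp only [Function.comp_apply, zero_mul, add_zero]
  linear_combination (-2 * √2 * x₂ ^ 2) *
    (Real.sign x₃ * Real.sign x₃ * e * e' * hc + 1/2 * e * e' * hs + 1/2 * hexp)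

lemma hasDerivAt_A'_boost {x₂ x₃ : ℝ} (hx₃ : x₃ ≠ 0) :
    HasDerivAt (fun t => A' (x₂ + t * x₃, x₃ + t * x₂)) (B' (x₂, x₃)) 0 := by
  by_cases hq : 0 < x₂ ^ 2 - x₃ ^ 2
  · have hx₂ : x₂ ≠ 0 := by
      rintro rfl
      nlinarith [sq_nonneg x₃]
    have hev : (fun t => A' (x₂ + t * x₃, x₃ + t * x₂)) =ᶠ[𝓝 0] fun t =>
        -(1/2) * (Real.sign x₃ * (x₂ + t * x₃) - Real.sign x₂ * (x₃ + t * x₂))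
          * exp (-(π * ((x₂ + t * x₃) ^ 2 - (x₃ + t * x₂) ^ 2))) := by
      filter_upwards [eventually_sign_add_mul_eq hx₂ x₃, eventually_sign_add_mul_eq hx₃ x₂,
        eventually_one_sub_sq_pos] with t h₂ h₃ ht
      rw [A'_eq_of_pos (by rw [boost_sq_sub_sq]; positivity), h₂, h₃]
    have hlin := (((hasDerivAt_const_add_mul x₂ x₃ 0).const_mul (Real.sign x₃)).sub
      ((hasDerivAt_const_add_mul x₃ x₂ 0).const_mul (Real.sign x₂))).const_mul (-(1/2) : ℝ)
    refine ((hlin.mul_exp_boost x₂ x₃).congr_of_eventuallyEq hev).congr_deriv ?_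
    rw [B', if_pos hq, min_abs_sub_abs_add (by linarith), Real.sign_mul_self, Real.sign_mul_self]
    ring
  · have hev : (fun t => A' (x₂ + t * x₃, x₃ + t * x₂)) =ᶠ[𝓝 0] fun _ => 0 := by
      filter_upwards [eventually_one_sub_sq_pos] with t ht
      exact A'_eq_zero_of_nonpos (by rw [boost_sq_sub_sq]; nlinarith)
    rw [B', if_neg hq]
    exact (hasDerivAt_const 0 0).congr_of_eventuallyEq hev

lemma hasDerivAt_A_add_A'_boost_of_eq_zero (x₂ : ℝ) :
    HasDerivAt (fun t => A (x₂ + t * 0, 0 + t * x₂) + A' (x₂ + t * 0, 0 + t * x₂))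
      (B (x₂, 0) + B' (x₂, 0) - kudlaMillsonCoeff x₂ 0) 0 := by
  rcases eq_or_ne x₂ 0 with rfl | hx₂
  · have h : (fun t : ℝ => A (0 + t * 0, 0 + t * 0) + A' (0 + t * 0, 0 + t * 0))
        = fun _ => 0 := by
      funext t
      simp [A, A', B']
    rw [h]
    refine (hasDerivAt_const (0:ℝ) (0:ℝ)).congr_deriv ?_
    simp [B, B', kudlaMillsonCoeff_eq]
  set c := 1 / (2 * √π)
  set β := 2 * π * x₂ ^ 2
  have hβ : 0 < β := by positivity
  have hc : c * √π = 1 / 2 := by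
    simp only [c]
    field_simp
  have hev : (fun t => A (x₂ + t * 0, 0 + t * x₂) + A' (x₂ + t * 0, 0 + t * x₂)) =ᶠ[𝓝 0]
      fun t => |x₂| * (t / 2 - c * (2 * √β * ∫ s in (0:ℝ)..t, exp (-(β * s ^ 2))))
        * exp (-(π * ((x₂ + t * 0) ^ 2 - (0 + t * x₂) ^ 2))) := by
    filter_upwards [eventually_one_sub_sq_pos] with t ht
    have hq : 0 < (x₂ + t * 0) ^ 2 - (0 + t * x₂) ^ 2 := by
      rw [boost_sq_sub_sq]
      exact mul_pos ht (by simpa using (sq_pos_of_ne_zero hx₂ : (0:ℝ) < x₂ ^ 2))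
    rw [A'_eq_of_pos hq]
    simp only [A, mul_zero, add_zero, zero_add]
    rw [show 2 * π * (t * x₂) ^ 2 = β * t ^ 2 by ring, Real.sign_mul t x₂]
    set E := exp (-(π * (x₂ ^ 2 - (t * x₂) ^ 2)))
    set I := ∫ s in (0:ℝ)..t, exp (-(β * s ^ 2))
    linear_combination (c * x₂ * Real.sign x₂ * E) * sign_mul_Ginc_mul_sq hβ t
      + (x₂ * Real.sign t * Real.sign x₂ * E) * hc
      + (-2 * c * E * √β * I + 1/2 * E * t) * Real.sign_mul_self x₂
  have hI := ((by fun_prop : Continuous fun s => exp (-(β * s ^ 2))).integral_hasStrictDerivAt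
    0 0).hasDerivAt
  have hg := (((hasDerivAt_id (0:ℝ)).div_const 2).sub
    ((hI.const_mul (2 * √β)).const_mul c)).const_mul |x₂|
  refine ((hg.mul_exp_boost x₂ 0).congr_of_eventuallyEq hev).congr_deriv ?_
  have hsqrtβ : √β = √2 * √π * |x₂| := by
    rw [sqrt_mul' _ (sq_nonneg x₂), sqrt_sq_eq_abs, sqrt_mul two_pos.le]
  rw [B, B', if_pos (by simpa using (sq_pos_of_ne_zero hx₂ : (0:ℝ) < x₂ ^ 2)),
    kudlaMillsonCoeff_eq, hsqrtβ]
  simp only [sub_zero, add_zero, abs_zero, mul_zero, zero_mul, ne_eq, OfNat.ofNat_ne_zero,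
    not_false_eq_true, zero_pow, neg_zero, exp_zero, min_self, mul_one]
  linear_combination (-2 * √2 * |x₂| ^ 2 * exp (-(π * x₂ ^ 2))) * hc
    + (-√2 * exp (-(π * x₂ ^ 2))) * sq_abs x₂

/-- Paper Theorem 5.11 (second component of `dφ₀,₁ = φ₁,₁`): for every `x ∈ ℝ²`,
`t ↦ (A+A')(x₂ + t·x₃, x₃ + t·x₂)` is differentiable at `t = 0`, and
`(B+B')(x) - d/dt|₀ (A+A')(x₂+t·x₃, x₃+t·x₂) = 2^{-3/2}(4x₂² - 1/π)e^{-π(x₂²+x₃²)}`. -/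
theorem stmt10 (x₂ x₃ : ℝ) :
    DifferentiableAt ℝ
      (fun t : ℝ => A (x₂ + t * x₃, x₃ + t * x₂) + A' (x₂ + t * x₃, x₃ + t * x₂)) 0 ∧
    (B (x₂, x₃) + B' (x₂, x₃))
      - deriv (fun t : ℝ => A (x₂ + t * x₃, x₃ + t * x₂) + A' (x₂ + t * x₃, x₃ + t * x₂)) 0
      = (2:ℝ) ^ (-(3:ℝ)/2) * (4 * x₂ ^ 2 - 1 / Real.pi) *
          Real.exp (-(Real.pi * (x₂ ^ 2 + x₃ ^ 2))) := by
  have hderiv : HasDerivAt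
      (fun t : ℝ => A (x₂ + t * x₃, x₃ + t * x₂) + A' (x₂ + t * x₃, x₃ + t * x₂))
      (B (x₂, x₃) + B' (x₂, x₃) - kudlaMillsonCoeff x₂ x₃) 0 := by
    rcases eq_or_ne x₃ 0 with rfl | hx₃
    · exact hasDerivAt_A_add_A'_boost_of_eq_zero x₂
    · exact ((hasDerivAt_A_boost hx₃).add (hasDerivAt_A'_boost hx₃)).congr_deriv (by ring)
  refine ⟨hderiv.differentiableAt, ?_⟩
  rw [hderiv.deriv, kudlaMillsonCoeff]
  ring
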